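/- Let R be a central simple algebra with F-basis {r₁, …, r_d} and let S be an arbitrary F-algebra. A linear map φ : R → R ⊗ S is an F-algebra homomorphism if and only if there exist c₁, …, c_d ∈ R ⊗ S such that: (a) φ(x) = Σ_{k=1}^d c_k (x r_k ⊗ 1) for all x ∈ R; (b) φ(x) c_k = c_k (x ⊗ 1) for all x ∈ R and all k; and (c) Σ_{k=1}^d c_k (r_k ⊗ 1) = 1. Moreover, writing c_k = Σ_{l=1}^d r_l ⊗ s_{kl} with s_{kl} ∈ S, for each k and l there exists b_{kl} ∈ R ⊗ S such that b_{kl} c_k = 1 ⊗ s_{kl}; consequently, if S is stably finite and some s_{kl} is invertible in S, then c = c_k is invertible in R ⊗ S and φ(x) = c (x ⊗ 1) c⁻¹ for all x ∈ R. -/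

import Mathlib

open scoped TensorProduct

universe u v

/-- `S` is stably finite: for all `n ≥ 1`, one-sided inverses in `Mₙ(S)` are two-sided. -/
def IsStablyFinite (S : Type v) [Ring S] : Prop :=
  ∀ n : ℕ, 1 ≤ n → ∀ x y : Matrix (Fin n) (Fin n) S, x * y = 1 → y * x = 1

/-!
For a finite-dimensional central simple algebra `R`, the sandwich map
`R ⊗ Rᵐᵒᵖ → End_F R`, `a ⊗ b ↦ (z ↦ a z b)`, is bijective: `R` is a simple
`R ⊗ Rᵐᵒᵖ`-module whose endomorphisms are the scalars, so Jacobson density makes the map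
surjective, and both sides have dimension `(dim R)²`. Hence the coordinate functional
`z ↦ r_k^*(z) • 1` is a sandwich `∑ aᵢ z bᵢ`, and `c_k := ∑ φ(aᵢ) (bᵢ ⊗ 1)` are the
required coefficients. Applying `∑ (aᵢ ⊗ 1) φ(bᵢ)` to the sandwich of `r_l^*` instead and
multiplying by `c_k` extracts `1 ⊗ s_{kl}`. Finally `R ⊗ S` embeds into `M_d(S)` through the
left regular representation, so over a stably finite `S` a left inverse of `c_k` is two-sided.
-/

open TensorProduct MulOpposite

section Azumaya

variable (F R : Type*) [Field F] [Ring R] [Algebra F R]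

attribute [local instance] instModuleTensorProductMop

lemma tmul_smul_eq_mul_mul_unop (a : R) (b : Rᵐᵒᵖ) (z : R) : (a ⊗ₜ[F] b) • z = a * z * b.unop :=
  AlgHom.mulLeftRight_apply F R a b z

instance isSimpleModule_tensorProduct_mulOpposite [IsSimpleRing R] :
    IsSimpleModule (R ⊗[F] Rᵐᵒᵖ) R := by
  rw [isSimpleModule_iff]
  refine { exists_pair_ne := ⟨⊥, ⊤, bot_ne_top⟩, eq_bot_or_eq_top := fun N => ?_ }
  let I : TwoSidedIdeal R := .mk' N N.zero_mem N.add_mem N.neg_mem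
    (fun {x y} hy => by simpa [tmul_smul_eq_mul_mul_unop] using N.smul_mem (x ⊗ₜ 1) hy)
    (fun {x y} hx => by simpa [tmul_smul_eq_mul_mul_unop] using N.smul_mem (1 ⊗ₜ op y) hx)
  have hI (z : R) : z ∈ I ↔ z ∈ N := TwoSidedIdeal.mem_mk' ..
  rcases IsSimpleRing.simple.eq_bot_or_eq_top I with h | h
  · left; ext z; simp [← hI, h]
  · right; ext z; simp [← hI, h]

variable {F R} in
lemma exists_eq_smul_of_bimoduleHom [Algebra.IsCentral F R] (g : Module.End (R ⊗[F] Rᵐᵒᵖ) R) :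
    ∃ c : F, ∀ z, g z = c • z := by
  have hleft (z : R) : g z = z * g 1 := by
    simpa [tmul_smul_eq_mul_mul_unop] using g.map_smul (z ⊗ₜ 1) 1
  have hright (z : R) : g z = g 1 * z := by
    simpa [tmul_smul_eq_mul_mul_unop] using g.map_smul (1 ⊗ₜ op z) 1
  obtain ⟨c, hc⟩ := (Algebra.IsCentral.mem_center_iff F).mp <|
    Subalgebra.mem_center_iff.mpr fun z => (hleft z).symm.trans (hright z)
  exact ⟨c, fun z => by rw [hright, hc, Algebra.smul_def]⟩

lemma mulLeftRight_surjective [IsSimpleRing R] [Algebra.IsCentral F R] [FiniteDimensional F R] :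
    Function.Surjective (AlgHom.mulLeftRight F R) := by
  classical
  intro f
  let f' : Module.End (Module.End (R ⊗[F] Rᵐᵒᵖ) R) R :=
    { toFun := f
      map_add' := f.map_add
      map_smul' := fun g z => by
        obtain ⟨c, hc⟩ := exists_eq_smul_of_bimoduleHom g
        simp only [Module.End.smul_def, hc, map_smul, RingHom.id_apply] }
  let b := Module.finBasis F R
  obtain ⟨t, ht⟩ := jacobson_density f' (Finset.univ.image b)
  exact ⟨t, b.ext fun i => (ht _ (Finset.mem_image_of_mem _ (Finset.mem_univ i))).symm⟩

instance IsAzumaya.of_isCentral_of_isSimpleRing [IsSimpleRing R] [Algebra.IsCentral F R]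
    [FiniteDimensional F R] : IsAzumaya F R where
  bij := by
    refine ⟨?_, mulLeftRight_surjective F R⟩
    have hrank : Module.finrank F (R ⊗[F] Rᵐᵒᵖ) = Module.finrank F (Module.End F R) := by
      simp [Module.finrank_tensorProduct, Module.finrank_linearMap, MulOpposite.finrank]
    exact (LinearMap.injective_iff_surjective_of_finrank_eq_finrank hrank
      (f := (AlgHom.mulLeftRight F R).toLinearMap)).mpr (mulLeftRight_surjective F R)

end Azumaya

section

variable {F R S : Type*} [Field F] [Ring R] [Algebra F R] [Ring S] [Algebra F S]

section Sandwich

variable [IsAzumaya F R] {d : ℕ} (r : Module.Basis (Fin d) F R)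

noncomputable def sandwichCoord (k : Fin d) : R ⊗[F] Rᵐᵒᵖ :=
  (AlgEquiv.ofBijective _ IsAzumaya.bij).symm ((r.coord k).smulRight 1)

lemma mulLeftRight_sandwichCoord (k : Fin d) (z : R) :
    AlgHom.mulLeftRight F R (sandwichCoord r k) z = r.repr z k • 1 := by
  have := (AlgEquiv.ofBijective _ (IsAzumaya.bij (R := F) (A := R))).apply_symm_apply
    ((r.coord k).smulRight 1)
  exact LinearMap.congr_fun this z

lemma tmul_one_mul_sandwichCoord (x : R) (k : Fin d) :
    (x ⊗ₜ 1) * sandwichCoord r k = (1 ⊗ₜ op x) * sandwichCoord r k := by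
  refine IsAzumaya.bij.injective (LinearMap.ext fun z => ?_)
  simp [mulLeftRight_sandwichCoord]

lemma sum_tmul_mul_sandwichCoord (x : R) :
    ∑ k, (1 ⊗ₜ op (x * r k)) * sandwichCoord r k = x ⊗ₜ 1 := by
  refine IsAzumaya.bij.injective (LinearMap.ext fun z => ?_)
  simp only [map_sum, map_mul, LinearMap.sum_apply, Module.End.mul_apply,
    AlgHom.mulLeftRight_apply, mulLeftRight_sandwichCoord, unop_op, unop_one, mul_one,
    smul_mul_assoc, one_mul]
  simp_rw [← mul_smul_comm, ← Finset.mul_sum, r.sum_repr]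

end Sandwich

section ApplyTensor

variable (φ : R →ₗ[F] R ⊗[F] S)

noncomputable def applyLeft : R ⊗[F] Rᵐᵒᵖ →ₗ[F] R ⊗[F] S :=
  lift <| (LinearMap.mul F (R ⊗[F] S)).compl₁₂ φ <|
    (Algebra.TensorProduct.includeLeft (S := F) (B := S)).toLinearMap ∘ₗ
      (opLinearEquiv F).symm.toLinearMap

noncomputable def applyRight : R ⊗[F] Rᵐᵒᵖ →ₗ[F] R ⊗[F] S :=
  lift <| (LinearMap.mul F (R ⊗[F] S)).compl₁₂
    (Algebra.TensorProduct.includeLeft (S := F) (B := S)).toLinearMap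
    (φ ∘ₗ (opLinearEquiv F).symm.toLinearMap)

@[simp] lemma applyLeft_tmul (a : R) (b : Rᵐᵒᵖ) :
    applyLeft φ (a ⊗ₜ b) = φ a * (b.unop ⊗ₜ 1) := rfl

@[simp] lemma applyRight_tmul (a : R) (b : Rᵐᵒᵖ) :
    applyRight φ (a ⊗ₜ b) = (a ⊗ₜ 1) * φ b.unop := rfl

lemma applyLeft_tmul_one (x : R) : applyLeft φ (x ⊗ₜ 1) = φ x := by
  rw [applyLeft_tmul, unop_one, ← Algebra.TensorProduct.one_def, mul_one]

lemma applyLeft_mul_tmul_one (t : R ⊗[F] Rᵐᵒᵖ) (x : R) :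
    applyLeft φ t * (x ⊗ₜ 1) = applyLeft φ ((1 ⊗ₜ op x) * t) := by
  induction t using TensorProduct.induction_on with
  | zero => simp
  | tmul a b => simp [mul_assoc]
  | add t₁ t₂ h₁ h₂ => simp [add_mul, mul_add, h₁, h₂]

lemma mul_applyLeft (hφ : ∀ x y, φ (x * y) = φ x * φ y) (x : R) (t : R ⊗[F] Rᵐᵒᵖ) :
    φ x * applyLeft φ t = applyLeft φ ((x ⊗ₜ 1) * t) := by
  induction t using TensorProduct.induction_on with
  | zero => simp
  | tmul a b => simp [hφ, mul_assoc]
  | add t₁ t₂ h₁ h₂ => simp [mul_add, h₁, h₂]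

lemma tmul_one_mul_mul_tmul_one (a b : R) (c : R ⊗[F] S) :
    (a ⊗ₜ 1) * c * (b ⊗ₜ 1) = (LinearMap.mulLeft F a ∘ₗ LinearMap.mulRight F b).rTensor S c := by
  induction c using TensorProduct.induction_on with
  | zero => simp
  | tmul x y => simp [mul_assoc]
  | add c₁ c₂ h₁ h₂ => simp [add_mul, mul_add, h₁, h₂]

lemma applyRight_mul {c : R ⊗[F] S} (hc : ∀ x, φ x * c = c * (x ⊗ₜ 1)) (t : R ⊗[F] Rᵐᵒᵖ) :
    applyRight φ t * c = (AlgHom.mulLeftRight F R t).rTensor S c := by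
  induction t using TensorProduct.induction_on with
  | zero => simp
  | tmul a b =>
    rw [applyRight_tmul, mul_assoc, hc, ← mul_assoc, tmul_one_mul_mul_tmul_one]
    rfl
  | add t₁ t₂ h₁ h₂ => simp [add_mul, h₁, h₂, LinearMap.rTensor_add]

end ApplyTensor

section ExtractCoefficients

variable [IsAzumaya F R] {d : ℕ} (r : Module.Basis (Fin d) F R) (φ : R →ₗ[F] R ⊗[F] S)

lemma exists_sandwich_coeffs_of_map_mul (hφ : ∀ x y, φ (x * y) = φ x * φ y) :
    ∃ c : Fin d → R ⊗[F] S,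
      (∀ x : R, φ x = ∑ k, c k * ((x * r k) ⊗ₜ[F] (1 : S))) ∧
      (∀ (x : R) (k : Fin d), φ x * c k = c k * (x ⊗ₜ[F] (1 : S))) := by
  refine ⟨fun k => applyLeft φ (sandwichCoord r k), fun x => ?_, fun x k => ?_⟩
  · simp_rw [applyLeft_mul_tmul_one, ← map_sum, sum_tmul_mul_sandwichCoord, applyLeft_tmul_one]
  · rw [mul_applyLeft φ hφ, applyLeft_mul_tmul_one, tmul_one_mul_sandwichCoord]

lemma exists_mul_eq_one_tmul {c : R ⊗[F] S} {s : Fin d → S} (hφc : ∀ x, φ x * c = c * (x ⊗ₜ 1))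
    (hc : c = ∑ l, r l ⊗ₜ s l) (l : Fin d) : ∃ b : R ⊗[F] S, b * c = 1 ⊗ₜ s l := by
  refine ⟨applyRight φ (sandwichCoord r l), ?_⟩
  rw [applyRight_mul φ hφc]
  nth_rw 1 [hc]
  simp [mulLeftRight_sandwichCoord, Finsupp.single_apply, TensorProduct.ite_tmul]

lemma map_one_and_map_mul_iff :
    (φ 1 = 1 ∧ ∀ x y : R, φ (x * y) = φ x * φ y) ↔
      ∃ c : Fin d → R ⊗[F] S,
        (∀ x : R, φ x = ∑ k, c k * ((x * r k) ⊗ₜ[F] (1 : S))) ∧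
        (∀ (x : R) (k : Fin d), φ x * c k = c k * (x ⊗ₜ[F] (1 : S))) ∧
        (∑ k, c k * ((r k) ⊗ₜ[F] (1 : S)) = 1) := by
  constructor
  · rintro ⟨h1, hmul⟩
    obtain ⟨c, hφ, hc⟩ := exists_sandwich_coeffs_of_map_mul r φ hmul
    refine ⟨c, hφ, hc, ?_⟩
    simpa only [one_mul, h1] using (hφ 1).symm
  · rintro ⟨c, hφ, hc, hsum⟩
    refine ⟨by simpa only [hφ 1, one_mul] using hsum, fun x y => ?_⟩
    simp_rw [hφ (x * y), hφ y, Finset.mul_sum, ← mul_assoc, hc, mul_assoc,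
      Algebra.TensorProduct.tmul_mul_tmul, one_mul]

end ExtractCoefficients

lemma exists_injective_algHom_tensorProduct_matrix {d : ℕ} (r : Module.Basis (Fin d) F R) :
    ∃ ι : R ⊗[F] S →ₐ[F] Matrix (Fin d) (Fin d) S, Function.Injective ι := by
  let e : Matrix (Fin d) (Fin d) F ⊗[F] S ≃ₐ[F] Matrix (Fin d) (Fin d) S :=
    (Algebra.TensorProduct.comm F _ S).trans (matrixEquivTensor (Fin d) F S).symm
  refine ⟨e.toAlgHom.comp (Algebra.TensorProduct.map (Algebra.leftMulMatrix r) (.id F S)), ?_⟩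
  exact e.injective.comp <|
    Module.Flat.rTensor_preserves_injective_linearMap _ (Algebra.leftMulMatrix_injective r)

lemma IsStablyFinite.mul_eq_one_comm_tensorProduct [FiniteDimensional F R] [Nontrivial R]
    (hS : IsStablyFinite S) {x y : R ⊗[F] S} (h : x * y = 1) : y * x = 1 := by
  obtain ⟨ι, hι⟩ := exists_injective_algHom_tensorProduct_matrix (S := S) (Module.finBasis F R)
  refine hι ?_
  rw [map_mul, map_one, hS _ Module.finrank_pos _ _ (by rw [← map_mul, h, map_one])]

lemma exists_unit_eq_and_conj [FiniteDimensional F R] [Nontrivial R] (hS : IsStablyFinite S)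
    {φ : R →ₗ[F] R ⊗[F] S} {c b : R ⊗[F] S} {s : S} (hφc : ∀ x, φ x * c = c * (x ⊗ₜ 1))
    (hbc : b * c = 1 ⊗ₜ s) (hs : IsUnit s) :
    ∃ u : (R ⊗[F] S)ˣ, u.val = c ∧ ∀ x, φ x = u.val * (x ⊗ₜ[F] 1) * u⁻¹.val := by
  obtain ⟨s, rfl⟩ := hs
  have hleft : ((1 ⊗ₜ[F] (↑s⁻¹ : S)) * b) * c = 1 := by
    rw [mul_assoc, hbc, Algebra.TensorProduct.tmul_mul_tmul, one_mul, Units.inv_mul,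
      Algebra.TensorProduct.one_def]
  have hright := hS.mul_eq_one_comm_tensorProduct hleft
  refine ⟨⟨c, _, hright, hleft⟩, rfl, fun x => ?_⟩
  rw [← hφc, mul_assoc, Units.val_mk, Units.inv_mk, hright, mul_one]

end

theorem basic_lemma (F : Type u) (R : Type u) (S : Type v)
    [Field F] [Ring R] [Algebra F R] [Ring S] [Algebra F S]
    [FiniteDimensional F R] [IsSimpleRing R] [Algebra.IsCentral F R]
    (d : ℕ) (r : Module.Basis (Fin d) F R) (φ : R →ₗ[F] R ⊗[F] S) :
    ((φ 1 = 1 ∧ ∀ x y : R, φ (x * y) = φ x * φ y) ↔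
      ∃ c : Fin d → R ⊗[F] S,
        (∀ x : R, φ x = ∑ k, c k * ((x * r k) ⊗ₜ[F] (1 : S))) ∧
        (∀ (x : R) (k : Fin d), φ x * c k = c k * (x ⊗ₜ[F] (1 : S))) ∧
        (∑ k, c k * ((r k) ⊗ₜ[F] (1 : S)) = 1)) ∧
    (∀ (c : Fin d → R ⊗[F] S) (s : Fin d → Fin d → S),
      (∀ x : R, φ x = ∑ k, c k * ((x * r k) ⊗ₜ[F] (1 : S))) →
      (∀ (x : R) (k : Fin d), φ x * c k = c k * (x ⊗ₜ[F] (1 : S))) →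
      (∑ k, c k * ((r k) ⊗ₜ[F] (1 : S)) = 1) →
      (∀ k, c k = ∑ l, (r l) ⊗ₜ[F] s k l) →
      (∀ k l : Fin d, ∃ b : R ⊗[F] S, b * c k = (1 : R) ⊗ₜ[F] s k l) ∧
      (IsStablyFinite S → ∀ k l : Fin d, IsUnit (s k l) →
        ∃ u : (R ⊗[F] S)ˣ, Units.val u = c k ∧
          ∀ x : R, φ x = Units.val u * (x ⊗ₜ[F] (1 : S)) * Units.val u⁻¹)) := by
  refine ⟨map_one_and_map_mul_iff r φ, fun c s _ hc _ hcs => ?_⟩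
  have hinv (k l : Fin d) := exists_mul_eq_one_tmul r φ (hc · k) (hcs k) l
  refine ⟨hinv, fun hS k l hu => ?_⟩
  obtain ⟨b, hb⟩ := hinv k l
  exact exists_unit_eq_and_conj hS (hc · k) hb hu
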